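/- Let M be a nonzero maximal subalgebra of the Lie algebra W_n with rk_A(M) < n, i.e., any n elements of M are linearly dependent over A. Then M, with the induced Lie bracket, is a simple Lie algebra (M is nonabelian and its only Lie ideals are 0 and M). -/

import Mathlib

/-!
Since `M` is maximal and has rank `< n`, its `A`-span (again a Lie subalgebra) cannot be all
of `W_n`: a set spanning `W_n` contains `n` derivations whose values at `x_1, …, x_n` form a
matrix invertible at the origin. So `M` is an `A`-submodule, which already makes `M`
non-abelian, as `[D, aD] = D(a) D`.
Given a nonzero ideal `J` of `M`, consider the ideal `S = {q ∈ A | q M ⊆ J}` of `A`. Bracket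
identities in `M` show that for `0 ≠ u ∈ J` all `A`-multiples of `w = u(u(a)) u` lie in `J`,
and then `w(b) ∈ S`, so `S ≠ 0`; similarly `M` preserves `S`, so `M` lies in the stabilizer
`T` of `S`, a Lie subalgebra of `W_n`. If `T = M`, then `f ∂_1, …, f ∂_n ∈ T` for `0 ≠ f ∈ S`
contradicts `rk_A M < n`; hence `T = W_n`, so `S` is stable under all `∂_i` and therefore
contains `1`. Thus `M = 1 • M ⊆ J`.
-/

open MvPolynomial

/-- `Wn K n` is the Lie algebra of all `K`-derivations of `K[x_1, …, x_n]`. -/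
abbrev Wn (K : Type) [Field K] (n : ℕ) :=
  Derivation K (MvPolynomial (Fin n) K) (MvPolynomial (Fin n) K)

namespace Derivation
variable {K R : Type*} [CommRing K] [CommRing R] [Algebra K R]

instance : Module.IsTorsionFree R (Derivation K R R) :=
  DFunLike.coe_injective.moduleIsTorsionFree _ fun _ _ => rfl

theorem lie_smul_right (D E : Derivation K R R) (a : R) :
    ⁅D, a • E⁆ = D a • E + a • ⁅D, E⁆ := by
  ext b
  simp only [commutator_apply, smul_apply, add_apply, leibniz, smul_eq_mul]
  ring

theorem smul_lie_left (D E : Derivation K R R) (a : R) :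
    ⁅a • D, E⁆ = a • ⁅D, E⁆ - E a • D := by
  rw [← lie_skew, lie_smul_right, ← lie_skew D E]
  module

theorem exists_apply_ne_zero {D : Derivation K R R} (hD : D ≠ 0) : ∃ a, D a ≠ 0 := by
  by_contra! h
  exact hD (ext h)

theorem exists_apply_apply_ne_zero [IsDomain R] [CharZero R] {D : Derivation K R R}
    (hD : D ≠ 0) : ∃ a, D (D a) ≠ 0 := by
  by_contra! h
  refine hD (ext fun a => ?_)
  have hsq : D (D (a * a)) = 2 * D a ^ 2 := by
    simp only [leibniz, map_add, smul_eq_mul, h a]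
    ring
  simpa using hsq.symm.trans (h _)

theorem lie_mem_span {s : Set (Derivation K R R)} (hs : ∀ x ∈ s, ∀ y ∈ s, ⁅x, y⁆ ∈ s)
    {x y : Derivation K R R} (hx : x ∈ Submodule.span R s) (hy : y ∈ Submodule.span R s) :
    ⁅x, y⁆ ∈ Submodule.span R s := by
  have hleft : ∀ x ∈ s, ⁅x, y⁆ ∈ Submodule.span R s := by
    intro x hx
    induction hy using Submodule.span_induction with
    | mem y hy => exact Submodule.subset_span (hs x hx y hy)
    | zero => simp
    | add y z _ _ hy hz => rw [lie_add]; exact add_mem hy hz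
    | smul a y hy' hy =>
      rw [lie_smul_right]
      exact add_mem (Submodule.smul_mem _ _ hy') (Submodule.smul_mem _ _ hy)
  induction hx using Submodule.span_induction with
  | mem x hx => exact hleft x hx
  | zero => simp
  | add x z _ _ hx hz => rw [add_lie]; exact add_mem hx hz
  | smul a x hx' hx =>
    rw [smul_lie_left]
    exact sub_mem (Submodule.smul_mem _ _ hx) (Submodule.smul_mem _ _ hx')

end Derivation

namespace LieSubalgebra
variable {K R : Type*} [CommRing K] [CommRing R] [Algebra K R]

theorem smul_mem_of_maximal {M : LieSubalgebra K (Derivation K R R)}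
    (hmax : ∀ L, M < L → L = ⊤)
    (hspan : Submodule.span R (M : Set (Derivation K R R)) ≠ ⊤) :
    ∀ (a : R), ∀ x ∈ M, a • x ∈ M := by
  let L : LieSubalgebra K (Derivation K R R) :=
    { toSubmodule := (Submodule.span R (M : Set (Derivation K R R))).restrictScalars K
      lie_mem' := Derivation.lie_mem_span fun x hx y hy => M.lie_mem hx hy }
  intro a x hx
  obtain hML | hML := (show M ≤ L from fun y hy => Submodule.subset_span hy).eq_or_lt
  · rw [hML]
    exact Submodule.smul_mem _ a (Submodule.subset_span hx)
  · refine absurd (Submodule.eq_top_iff'.mpr fun w => ?_) hspan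
    change w ∈ L
    rw [hmax L hML]
    trivial

theorem not_isLieAbelian_of_smul_mem [IsDomain R] {M : LieSubalgebra K (Derivation K R R)}
    (hA : ∀ (a : R), ∀ x ∈ M, a • x ∈ M) (hM0 : M ≠ ⊥) : ¬ IsLieAbelian M := by
  intro hab
  obtain ⟨m, hm, hm0⟩ :=
    Submodule.exists_mem_ne_zero_of_ne_bot ((toSubmodule_eq_bot M).not.mpr hM0)
  obtain ⟨b, hb⟩ := Derivation.exists_apply_ne_zero hm0
  have h : ⁅m, b • m⁆ = 0 :=
    congrArg Subtype.val (trivial_lie_zero M M ⟨m, hm⟩ ⟨_, hA b m hm⟩)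
  rw [Derivation.lie_smul_right, lie_self, smul_zero, add_zero] at h
  exact smul_ne_zero hb hm0 h

end LieSubalgebra

section Stabilizer
variable (K : Type*) {R : Type*} [CommRing K] [CommRing R] [Algebra K R]

def Ideal.derivationStabilizer (S : Ideal R) : LieSubalgebra K (Derivation K R R) where
  carrier := {D | ∀ q ∈ S, D q ∈ S}
  add_mem' hD hE q hq := S.add_mem (hD q hq) (hE q hq)
  zero_mem' _ _ := S.zero_mem
  smul_mem' c D hD q hq := by
    rw [Derivation.smul_apply, Algebra.smul_def]
    exact S.mul_mem_left _ (hD q hq)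
  lie_mem' {D E} hD hE q hq := by
    rw [Derivation.commutator_apply]
    exact S.sub_mem (hD _ (hE q hq)) (hE _ (hD q hq))

variable {K}

theorem Ideal.smul_mem_derivationStabilizer {S : Ideal R} {f : R} (hf : f ∈ S)
    (D : Derivation K R R) : f • D ∈ S.derivationStabilizer K := fun _ _ =>
  S.mul_mem_right _ hf

end Stabilizer

namespace LieSubalgebra
variable {K R : Type*} [Field K] [CommRing R] [Algebra K R]
  (M : LieSubalgebra K (Derivation K R R)) (hA : ∀ (a : R), ∀ x ∈ M, a • x ∈ M)
  (J : Submodule K (Derivation K R R))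

def multiplierIdeal : Ideal R where
  carrier := {q | ∀ m ∈ M, q • m ∈ J}
  add_mem' hp hq m hm := by rw [add_smul]; exact J.add_mem (hp m hm) (hq m hm)
  zero_mem' m _ := by rw [zero_smul]; exact J.zero_mem
  smul_mem' c q hq m hm := by rw [smul_eq_mul, mul_comm, mul_smul]; exact hq _ (hA c m hm)

variable {M J} (hJ : ∀ m ∈ M, ∀ u ∈ J, ⁅m, u⁆ ∈ J)
include hA hJ

theorem smul_lie_sub_apply_smul_mem {u : Derivation K R R} (hu : u ∈ J) (a : R)
    {m : Derivation K R R} (hm : m ∈ M) : a • ⁅m, u⁆ - u a • m ∈ J := by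
  simpa only [Derivation.smul_lie_left] using hJ _ (hA a m hm) u hu

theorem le_derivationStabilizer_multiplierIdeal :
    M ≤ (M.multiplierIdeal hA J).derivationStabilizer K := by
  intro m hm q hq m' hm'
  have h := J.sub_mem (hJ m hm _ (hq m' hm')) (hq _ (M.lie_mem hm hm'))
  rwa [Derivation.lie_smul_right, add_sub_cancel_right] at h

theorem apply_mem_multiplierIdeal {w : Derivation K R R} (hwJ : ∀ c : R, c • w ∈ J) (a : R) :
    w a ∈ M.multiplierIdeal hA J := by
  intro m hm
  have hlie : a • ⁅m, w⁆ ∈ J := by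
    have h := J.sub_mem (hJ m hm _ (hwJ a)) (hwJ (m a))
    rwa [Derivation.lie_smul_right, add_sub_cancel_left] at h
  have h := J.sub_mem hlie (smul_lie_sub_apply_smul_mem hA hJ (by simpa using hwJ 1) a hm)
  rwa [sub_sub_cancel] at h

variable [CharZero K] (hJM : J ≤ M.toSubmodule)
include hJM

theorem smul_apply_apply_smul_mem {u : Derivation K R R} (hu : u ∈ J) (a c : R) :
    (c * u (u a)) • u ∈ J := by
  have huM : u ∈ M := hJM hu
  have hq : u a • u ∈ J := by
    simpa using J.neg_mem (smul_lie_sub_apply_smul_mem hA hJ hu a huM)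
  have h2 := J.sub_mem (hJ _ (hA c u huM) _ hq)
    (smul_lie_sub_apply_smul_mem hA hJ hu (u a) (hA c u huM))
  have key : ⁅c • u, u a • u⁆ - (u a • ⁅c • u, u⁆ - u (u a) • c • u) =
      (2 : K) • ((c * u (u a)) • u) := by
    ext b
    simp only [Derivation.commutator_apply, Derivation.smul_apply, Derivation.sub_apply,
      Derivation.leibniz, smul_eq_mul, Algebra.smul_def, map_ofNat]
    ring
  rw [key] at h2
  simpa using J.smul_mem (2⁻¹ : K) h2

theorem multiplierIdeal_ne_bot [IsDomain R] (hJ0 : J ≠ ⊥) : M.multiplierIdeal hA J ≠ ⊥ := by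
  have : CharZero R := charZero_of_injective_algebraMap (algebraMap K R).injective
  obtain ⟨u, hu, hu0⟩ := Submodule.exists_mem_ne_zero_of_ne_bot hJ0
  obtain ⟨a, ha⟩ := Derivation.exists_apply_apply_ne_zero hu0
  obtain ⟨b, hb⟩ := Derivation.exists_apply_ne_zero (smul_ne_zero ha hu0)
  have hmem := apply_mem_multiplierIdeal hA hJ
    (fun c => by rw [smul_smul]; exact smul_apply_apply_smul_mem hA hJ hJM hu a c) b
  exact fun h => hb (by rwa [h, Ideal.mem_bot] at hmem)

end LieSubalgebra

namespace MvPolynomial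

theorem totalDegree_pderiv_lt {σ R : Type*} [CommSemiring R] {f : MvPolynomial σ R} {i : σ}
    (h : pderiv i f ≠ 0) : (pderiv i f).totalDegree < f.totalDegree := by
  classical
  obtain ⟨s, hs, hdeg⟩ := Finset.exists_mem_eq_sup _ (support_nonempty.mpr h)
    fun s : σ →₀ ℕ => s.sum fun _ e => e
  have hsf : s + Finsupp.single i 1 ∈ f.support := by
    rw [mem_support_iff, coeff_pderiv] at hs
    exact mem_support_iff.mpr (left_ne_zero_of_mul hs)
  calc (pderiv i f).totalDegree = s.sum fun _ e => e := hdeg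
    _ < (s + Finsupp.single i 1).sum fun _ e => e := by
      rw [Finsupp.sum_add_index' (fun _ => rfl) fun _ _ _ => rfl, Finsupp.sum_single_index rfl]
      omega
    _ ≤ f.totalDegree := le_totalDegree hsf

theorem exists_pderiv_ne_zero {σ R : Type*} [CommSemiring R] [CharZero R] [NoZeroDivisors R]
    {f : MvPolynomial σ R} (hf : f.totalDegree ≠ 0) : ∃ i, pderiv i f ≠ 0 := by
  classical
  obtain ⟨s, hs, i, hi⟩ : ∃ s ∈ f.support, ∃ i, s i ≠ 0 := by
    by_contra! h
    exact hf ((totalDegree_eq_zero_iff σ f).mpr h)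
  refine ⟨i, fun h => ?_⟩
  have hcoeff := coeff_pderiv (i := i) f (s - Finsupp.single i 1)
  rw [h, coeff_zero, tsub_add_cancel_of_le
    (Finsupp.single_le_iff.mpr (Nat.one_le_iff_ne_zero.mpr hi))] at hcoeff
  exact mul_ne_zero (mem_support_iff.mp hs) (Nat.cast_add_one_ne_zero _) hcoeff.symm

variable {σ K : Type*} [CommRing K]

noncomputable def derivationCoords :
    Derivation K (MvPolynomial σ K) (MvPolynomial σ K) →ₗ[MvPolynomial σ K]
      σ → MvPolynomial σ K where
  toFun D i := D (X i)
  map_add' _ _ := rfl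
  map_smul' _ _ := rfl

theorem linearIndependent_pderiv :
    LinearIndependent (MvPolynomial σ K) (pderiv : σ → Derivation K (MvPolynomial σ K) _) := by
  classical
  refine LinearIndependent.of_comp derivationCoords ?_
  convert Pi.linearIndependent_single_one σ (MvPolynomial σ K) using 1
  ext i j
  simp [derivationCoords, Pi.single_apply, eq_comm]

theorem linearIndependent_smul_pderiv [IsDomain K] {f : MvPolynomial σ K} (hf : f ≠ 0) :
    LinearIndependent (MvPolynomial σ K)
      fun i => f • (pderiv i : Derivation K (MvPolynomial σ K) _) :=
  linearIndependent_pderiv.map' (DistribSMul.toLinearMap (MvPolynomial σ K) _ f)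
    (LinearMap.ker_eq_bot.mpr (smul_right_injective _ hf))

end MvPolynomial

theorem Ideal.eq_top_of_pderiv_mem {σ K : Type*} [Field K] [CharZero K]
    {I : Ideal (MvPolynomial σ K)} (hI : I ≠ ⊥)
    (hpderiv : ∀ i, ∀ f ∈ I, pderiv i f ∈ I) :
    I = ⊤ := by
  suffices ∀ d, ∀ f ∈ I, f ≠ 0 → f.totalDegree = d → I = ⊤ by
    obtain ⟨f, hf, hf0⟩ := Submodule.exists_mem_ne_zero_of_ne_bot hI
    exact this _ f hf hf0 rfl
  intro d
  induction d using Nat.strong_induction_on with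
  | _ d ih =>
    rintro f hf hf0 rfl
    by_cases hd : f.totalDegree = 0
    · refine I.eq_top_of_isUnit_mem hf (isUnit_iff_totalDegree_of_isReduced.mpr ⟨?_, hd⟩)
      refine isUnit_iff_ne_zero.mpr fun h0 => hf0 ?_
      rw [totalDegree_eq_zero_iff_eq_C.mp hd, h0, map_zero]
    · obtain ⟨i, hi⟩ := exists_pderiv_ne_zero hd
      exact ih _ (totalDegree_pderiv_lt hi) _ (hpderiv i f hf) hi rfl

theorem Matrix.linearIndependent_col_of_map {n R K : Type*} [Fintype n] [DecidableEq n]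
    [CommRing R] [IsDomain R] [CommRing K] [IsDomain K] (f : R →+* K) {A : Matrix n n R}
    (h : LinearIndependent K (A.map f).col) : LinearIndependent R A.col := by
  rw [linearIndependent_col_iff, nonsingular_iff_det_ne_zero] at h ⊢
  refine fun hA => h ?_
  rw [← RingHom.mapMatrix_apply, ← RingHom.map_det, hA, map_zero]

namespace Wn
variable {K : Type} [Field K] {n : ℕ}

theorem linearIndependent_of_constantCoeff {v : Fin n → Wn K n}
    (h : LinearIndependent K fun k i => constantCoeff (v k (X i))) :
    LinearIndependent (MvPolynomial (Fin n) K) v := by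
  let Φ : Matrix (Fin n) (Fin n) (MvPolynomial (Fin n) K) := .of fun i k => v k (X i)
  exact LinearIndependent.of_comp derivationCoords
    (Matrix.linearIndependent_col_of_map (constantCoeff : _ →+* K) (A := Φ) h)

theorem exists_linearIndependent_of_span_eq_top {s : Set (Wn K n)}
    (hs : Submodule.span (MvPolynomial (Fin n) K) s = ⊤) :
    ∃ v : Fin n → Wn K n, (∀ k, v k ∈ s) ∧
      LinearIndependent (MvPolynomial (Fin n) K) v := by
  have : RingHomSurjective (constantCoeff : MvPolynomial (Fin n) K →+* K) :=
    ⟨fun c => ⟨C c, constantCoeff_C _ c⟩⟩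
  let κ : Wn K n →ₛₗ[(constantCoeff : MvPolynomial (Fin n) K →+* K)] Fin n → K :=
    { toFun D i := constantCoeff (D (X i))
      map_add' _ _ := by ext; simp
      map_smul' _ _ := by ext; simp }
  have hκ : Function.Surjective κ := fun x =>
    ⟨mkDerivation K fun i => C (x i), funext fun i => by simp [κ, mkDerivation_X]⟩
  have hspan : Submodule.span K (Set.range fun d : s => κ d) = ⊤ := by
    rw [← Set.image_eq_range, ← Submodule.map_span, hs, Submodule.map_top,
      LinearMap.range_eq_top.mpr hκ]
  obtain ⟨ι, a, -, hspan', hli⟩ := exists_linearIndependent' K fun d : s => κ d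
  let B := Module.Basis.mk hli (by rw [hspan', hspan])
  let e := (Pi.basisFun K (Fin n)).indexEquiv B
  refine ⟨fun k => a (e k), fun k => (a (e k)).2, linearIndependent_of_constantCoeff ?_⟩
  have hB : (fun k i => constantCoeff ((a (e k) : Wn K n) (X i))) = B ∘ e := by
    ext
    simp [B, κ]
  rw [hB]
  exact B.linearIndependent.comp e e.injective

theorem lieIdeal_eq_top_of_ne_bot [CharZero K] {M : LieSubalgebra K (Wn K n)}
    (hA : ∀ (a : MvPolynomial (Fin n) K), ∀ x ∈ M, a • x ∈ M)
    (hmax : ∀ L : LieSubalgebra K (Wn K n), M < L → L = ⊤)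
    (hrk : ∀ v : Fin n → Wn K n, (∀ i, v i ∈ M) →
      ¬ LinearIndependent (MvPolynomial (Fin n) K) v)
    {I : LieIdeal K M} (hI : I ≠ ⊥) : I = ⊤ := by
  let J : Submodule K (Wn K n) := (I : Submodule K M).map M.toSubmodule.subtype
  have hJM : J ≤ M.toSubmodule := by
    rintro _ ⟨x, -, rfl⟩
    exact x.2
  have hJ : ∀ m ∈ M, ∀ u ∈ J, ⁅m, u⁆ ∈ J := by
    rintro m hm _ ⟨x, hx, rfl⟩
    exact ⟨⁅⟨m, hm⟩, x⁆, I.lie_mem hx, rfl⟩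
  have hJ0 : J ≠ ⊥ := by
    obtain ⟨x, hx, hx0⟩ :=
      Submodule.exists_mem_ne_zero_of_ne_bot ((LieSubmodule.toSubmodule_eq_bot (N := I)).not.mpr hI)
    exact (Submodule.ne_bot_iff J).mpr ⟨x, ⟨x, hx, rfl⟩, fun h => hx0 (Subtype.ext h)⟩
  have hS0 := M.multiplierIdeal_ne_bot hA hJ hJM hJ0
  obtain hMS | hMS := (M.le_derivationStabilizer_multiplierIdeal hA hJ).eq_or_lt
  · obtain ⟨f, hf, hf0⟩ := Submodule.exists_mem_ne_zero_of_ne_bot hS0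
    exact absurd (linearIndependent_smul_pderiv hf0)
      (hrk _ fun j => hMS ▸ Ideal.smul_mem_derivationStabilizer hf (pderiv j))
  · have hS : M.multiplierIdeal hA J = ⊤ := Ideal.eq_top_of_pderiv_mem hS0 fun i =>
      (hmax _ hMS ▸ LieSubalgebra.mem_top (pderiv i) :)
    have h1 : (1 : MvPolynomial (Fin n) K) ∈ M.multiplierIdeal hA J := hS ▸ Submodule.mem_top
    refine eq_top_iff.mpr fun x _ => ?_
    obtain ⟨y, hy, hyx⟩ := h1 x x.2
    rwa [Subtype.ext (hyx.trans (one_smul _ _))] at hy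

end Wn

theorem maximal_subalgebra_rank_lt_isSimple_general
    {K : Type} [Field K] [CharZero K] {n : ℕ}
    (M : LieSubalgebra K (Wn K n))
    (hM0 : M ≠ ⊥)
    (hmax : ∀ L : LieSubalgebra K (Wn K n), M < L → L = ⊤)
    (hrk : ∀ v : Fin n → Wn K n, (∀ i, v i ∈ M) →
      ¬ LinearIndependent (MvPolynomial (Fin n) K) v) :
    LieAlgebra.IsSimple K M := by
  have hA : ∀ (a : MvPolynomial (Fin n) K), ∀ x ∈ M, a • x ∈ M :=
    LieSubalgebra.smul_mem_of_maximal hmax fun hspan =>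
      let ⟨v, hvM, hv⟩ := Wn.exists_linearIndependent_of_span_eq_top hspan
      hrk v hvM hv
  exact ⟨fun I => or_iff_not_imp_left.mpr (Wn.lieIdeal_eq_top_of_ne_bot hA hmax hrk),
    LieSubalgebra.not_isLieAbelian_of_smul_mem hA hM0⟩

/-- Every nonzero maximal Lie subalgebra of `Wn` of rank `< n` over `A = K[x_1,…,x_n]`
(i.e. any `n` of its elements are `A`-linearly dependent) is a simple Lie algebra. -/
theorem maximal_subalgebra_rank_lt_isSimple
    {K : Type} [Field K] [IsAlgClosed K] [CharZero K] {n : ℕ}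
    (M : LieSubalgebra K (Wn K n))
    (hM0 : M ≠ ⊥) (hMtop : M ≠ ⊤)
    (hmax : ∀ L : LieSubalgebra K (Wn K n), M < L → L = ⊤)
    (hrk : ∀ v : Fin n → Wn K n, (∀ i, v i ∈ M) →
      ¬ LinearIndependent (MvPolynomial (Fin n) K) v) :
    LieAlgebra.IsSimple K M :=
  maximal_subalgebra_rank_lt_isSimple_general M hM0 hmax hrk
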